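/- Let ℓ_1 = 2k + 1 and, for odd m ≥ 3, ℓ_m = c_{m−2} + 1; and let u_1 = 4k − 1 and, for odd m ≥ 3, u_m = c_{m−1} − 1. Then for every odd m ≥ 1 and every n with ℓ_m ≤ n ≤ u_m, writing r = (n − ℓ_m) mod 4: SG(n) = 1 if r ∈ {0,3}, and SG(n) = 0 if r ∈ {1,2}, where SG is the Sprague–Grundy function of the game i-Mark({2},{k}) with k ≡ 3 (mod 4). (That is, the SG sequence of the interval I_m for odd m is (1,0,0,1) repeated an integral number of times followed by 1.) -/
import Mathlib


/-- The minimum excludant of a finite set of naturals. -/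
noncomputable def mex (s : Finset ℕ) : ℕ := sInf {x : ℕ | x ∉ s}

/-- Sprague–Grundy function of the game i-Mark({2},{k}):
from a pile of `n ≥ 2` tokens one may subtract `2`,
or replace a positive pile size `n` divisible by `k` by `n / k`. -/
noncomputable def sg (k : ℕ) (hk : 2 ≤ k) (n : ℕ) : ℕ :=
  mex ((if h : 2 ≤ n then {sg k hk (n - 2)} else ∅) ∪
       (if h : 0 < n ∧ k ∣ n then {sg k hk (n / k)} else ∅))
termination_by n
decreasing_by
  · omega
  · exact Nat.div_lt_self h.1 hk

/-- The sequence `c_0 = 4k`, `c_m = k(c_{m−1} + 2)`. -/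
def c (k : ℕ) : ℕ → ℕ
  | 0 => 4 * k
  | m + 1 => k * (c k m + 2)

/-- The sequence `a_0 = k`, `a_m = k(a_{m−1} + 2)`. -/
def a (k : ℕ) : ℕ → ℕ
  | 0 => k
  | m + 1 => k * (a k m + 2)

/-- Left endpoint of the interval `I_m` for odd `m`:
`ℓ_1 = 2k + 1`, and `ℓ_m = c_{m−2} + 1` for odd `m ≥ 3`. -/
def ell (k m : ℕ) : ℕ := if m = 1 then 2 * k + 1 else c k (m - 2) + 1

/-- Right endpoint of the interval `I_m` for odd `m`:
`u_1 = 4k − 1`, and `u_m = c_{m−1} − 1` for odd `m ≥ 3`. -/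
def u (k m : ℕ) : ℕ := if m = 1 then 4 * k - 1 else c k (m - 1) - 1

lemma mex_eq {s : Finset ℕ} {n : ℕ} (h1 : n ∉ s) (h2 : ∀ m < n, m ∈ s) :
    mex s = n := by
  have hne : ({x : ℕ | x ∉ s} : Set ℕ).Nonempty := ⟨n, h1⟩
  refine le_antisymm (Nat.sInf_le h1) ?_
  by_contra h
  push_neg at h
  exact Nat.sInf_mem hne (h2 _ h)

lemma mex_empty : mex ∅ = 0 :=
  mex_eq (by simp) (by omega)

lemma mex_single (x : ℕ) : mex {x} = if x = 0 then 1 else 0 := by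
  split_ifs with h
  · refine mex_eq ?_ ?_
    · simp; omega
    · intro m hm
      simp only [Finset.mem_singleton]; omega
  · refine mex_eq ?_ ?_
    · simp; omega
    · intro m hm; omega

lemma mex_pair (x y : ℕ) :
    mex {x, y} = if x = 0 then (if y = 1 then 2 else 1) else
      if y = 0 then (if x = 1 then 2 else 1) else 0 := by
  split_ifs <;> refine mex_eq ?_ ?_ <;>
    (try intro m hm) <;> simp only [Finset.mem_insert, Finset.mem_singleton] <;> omega

lemma sg_sub {k : ℕ} (hk2 : 2 ≤ k) {n : ℕ} (hn : 2 ≤ n) (hnd : ¬ k ∣ n) :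
    sg k hk2 n = mex {sg k hk2 (n - 2)} := by
  rw [sg, dif_pos hn, dif_neg (by tauto), Finset.union_empty]

lemma sg_div {k : ℕ} (hk2 : 2 ≤ k) {n : ℕ} (hn : 2 ≤ n) (hd : k ∣ n) :
    sg k hk2 n = mex {sg k hk2 (n - 2), sg k hk2 (n / k)} := by
  rw [sg, dif_pos hn, dif_pos ⟨by omega, hd⟩, ← Finset.insert_eq]

lemma sg_zero {k : ℕ} (hk2 : 2 ≤ k) : sg k hk2 0 = 0 := by
  rw [sg, dif_neg (by omega), dif_neg (by omega), Finset.union_empty, mex_empty]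

lemma sg_one {k : ℕ} (hk2 : 2 ≤ k) : sg k hk2 1 = 0 := by
  rw [sg, dif_neg (by omega), dif_neg ?_, Finset.union_empty, mex_empty]
  rintro ⟨-, h⟩
  have := Nat.le_of_dvd one_pos h
  omega

lemma c_zero (k : ℕ) : c k 0 = 4 * k := rfl
lemma c_succ (k m : ℕ) : c k (m + 1) = k * (c k m + 2) := rfl

lemma k_dvd_c (k p : ℕ) : k ∣ c k p := by
  cases p with
  | zero => exact ⟨4, by rw [c_zero]; ring⟩
  | succ q => exact ⟨c k q + 2, rfl⟩

lemma c_ge {k : ℕ} (hk3 : 3 ≤ k) (p : ℕ) : 4 * k ≤ c k p := by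
  induction p with
  | zero => rw [c_zero]
  | succ q ih =>
    have h1 : c k q + 2 ≤ k * (c k q + 2) := Nat.le_mul_of_pos_left _ (by omega)
    rw [c_succ]; omega

lemma c_mod4 {k : ℕ} (hk : k % 4 = 3) (p : ℕ) : c k p % 4 = 2 * (p % 2) := by
  induction p with
  | zero => rw [c_zero]; omega
  | succ q ih =>
    rw [c_succ, Nat.mul_mod, hk]
    omega

/-- the periodic 0/1 pattern for zone `p` -/
def pat (p n : ℕ) : ℕ :=
  if p % 2 = 0 then (if n % 4 = 2 ∨ n % 4 = 3 then 1 else 0)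
  else (if n % 4 = 0 ∨ n % 4 = 3 then 1 else 0)

/-- the full Sprague-Grundy value prediction for zone `p` -/
def val (k p n : ℕ) : ℕ :=
  if (p = 0 ∧ n = 2 * k) ∨ n = c k p then 2 else pat p n

lemma pat_cases (p n : ℕ) :
    (pat p n = 1 ∧ ((p % 2 = 0 ∧ (n % 4 = 2 ∨ n % 4 = 3)) ∨ (p % 2 = 1 ∧ (n % 4 = 0 ∨ n % 4 = 3)))) ∨
    (pat p n = 0 ∧ ((p % 2 = 0 ∧ ¬(n % 4 = 2 ∨ n % 4 = 3)) ∨ (p % 2 = 1 ∧ ¬(n % 4 = 0 ∨ n % 4 = 3)))) := by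
  unfold pat
  split_ifs <;> omega

lemma val_cases (k p n : ℕ) :
    (val k p n = 2 ∧ ((p = 0 ∧ n = 2 * k) ∨ n = c k p)) ∨
    (val k p n = pat p n ∧ ¬((p = 0 ∧ n = 2 * k) ∨ n = c k p)) := by
  unfold val
  split_ifs with h
  · exact Or.inl ⟨rfl, h⟩
  · exact Or.inr ⟨rfl, h⟩


lemma step0 (k : ℕ) (hk : k % 4 = 3) (hk2 : 2 ≤ k) (n : ℕ)
    (IH : ∀ m < n, ∀ p, (p = 0 ∨ c k (p - 1) < m) → m ≤ c k p → sg k hk2 m = val k p m)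
    (hhi : n ≤ 4 * k) : sg k hk2 n = val k 0 n := by
  have hk3 : 3 ≤ k := by omega
  have hc0 : c k 0 = 4 * k := c_zero k
  have hT := val_cases k 0 n
  have hT' := pat_cases 0 n
  by_cases hd : k ∣ n
  · obtain ⟨q, hq⟩ := hd
    have hq4 : q ≤ 4 := by
      have h' : k * q ≤ k * 4 := by omega
      exact Nat.le_of_mul_le_mul_left h' (by omega)
    have hdivk : n / k = q := by rw [hq]; exact Nat.mul_div_cancel_left q (by omega)
    interval_cases q
    · -- n = 0
      have hn0 : n = 0 := by omega
      rw [hn0] at hT hT' ⊢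
      rw [sg_zero]
      clear IH
      omega
    · -- n = k
      rw [sg_div hk2 (by omega) ⟨1, hq⟩, hdivk,
        IH (n - 2) (by omega) 0 (Or.inl rfl) (by omega),
        IH 1 (by omega) 0 (Or.inl rfl) (by omega), mex_pair]
      clear IH
      have hA := val_cases k 0 (n - 2)
      have hA' := pat_cases 0 (n - 2)
      have hB := val_cases k 0 1
      have hB' := pat_cases 0 1
      split_ifs <;> omega
    · -- n = 2k
      rw [sg_div hk2 (by omega) ⟨2, hq⟩, hdivk,
        IH (n - 2) (by omega) 0 (Or.inl rfl) (by omega),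
        IH 2 (by omega) 0 (Or.inl rfl) (by omega), mex_pair]
      clear IH
      have hA := val_cases k 0 (n - 2)
      have hA' := pat_cases 0 (n - 2)
      have hB := val_cases k 0 2
      have hB' := pat_cases 0 2
      split_ifs <;> omega
    · -- n = 3k
      rw [sg_div hk2 (by omega) ⟨3, hq⟩, hdivk,
        IH (n - 2) (by omega) 0 (Or.inl rfl) (by omega),
        IH 3 (by omega) 0 (Or.inl rfl) (by omega), mex_pair]
      clear IH
      have hA := val_cases k 0 (n - 2)
      have hA' := pat_cases 0 (n - 2)
      have hB := val_cases k 0 3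
      have hB' := pat_cases 0 3
      split_ifs <;> omega
    · -- n = 4k
      rw [sg_div hk2 (by omega) ⟨4, hq⟩, hdivk,
        IH (n - 2) (by omega) 0 (Or.inl rfl) (by omega),
        IH 4 (by omega) 0 (Or.inl rfl) (by omega), mex_pair]
      clear IH
      have hA := val_cases k 0 (n - 2)
      have hA' := pat_cases 0 (n - 2)
      have hB := val_cases k 0 4
      have hB' := pat_cases 0 4
      split_ifs <;> omega
  · have hne1 : n ≠ 2 * k := fun h => hd (h ▸ ⟨2, by ring⟩)
    have hne2 : n ≠ 4 * k := fun h => hd (h ▸ ⟨4, by ring⟩)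
    by_cases h2 : 2 ≤ n
    · rw [sg_sub hk2 h2 hd,
        IH (n - 2) (by omega) 0 (Or.inl rfl) (by omega), mex_single]
      clear IH
      have hA := val_cases k 0 (n - 2)
      have hA' := pat_cases 0 (n - 2)
      split_ifs <;> omega
    · have hn01 : n = 0 ∨ n = 1 := by omega
      rcases hn01 with h | h
      · exact absurd (h ▸ dvd_zero k) hd
      · rw [h] at hT hT' ⊢
        rw [sg_one]
        omega

set_option maxHeartbeats 1000000 in
lemma stepS_div (k : ℕ) (hk : k % 4 = 3) (hk2 : 2 ≤ k) (n p' : ℕ)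
    (IH : ∀ m < n, ∀ p, (p = 0 ∨ c k (p - 1) < m) → m ≤ c k p → sg k hk2 m = val k p m)
    (hlo' : c k p' < n) (hhi : n ≤ c k (p' + 1)) (hd : k ∣ n) :
    sg k hk2 n = val k (p' + 1) n := by
  have hk3 : 3 ≤ k := by omega
  have hCd : k ∣ c k p' := k_dvd_c k p'
  have hC4 : 4 * k ≤ c k p' := c_ge hk3 p'
  have hCm : c k p' % 4 = 2 * (p' % 2) := c_mod4 hk p'
  have hcc : c k (p' + 1) = k * (c k p' + 2) := rfl
  have hbig : 3 * c k p' + 6 ≤ c k (p' + 1) := by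
    calc 3 * c k p' + 6 = 3 * (c k p' + 2) := by ring
      _ ≤ k * (c k p' + 2) := mul_le_mul_left hk3 _
      _ = c k (p' + 1) := hcc.symm
  have hCz : p' ≠ 0 ∨ c k p' = 4 * k := by
    rcases p' with _ | q
    · exact Or.inr rfl
    · exact Or.inl (by omega)
  obtain ⟨m, hm⟩ := hd
  have hmpos : 0 < m := by
    rcases Nat.eq_zero_or_pos m with h | h
    · subst h; simp at hm; omega
    · exact h
  have hmlt : m < n := by
    have h1 : 1 * m < k * m := (Nat.mul_lt_mul_right hmpos).mpr (by omega)
    omega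
  have hdivk : n / k = m := by rw [hm]; exact Nat.mul_div_cancel_left m (by omega)
  have hmC2 : m ≤ c k p' + 2 := by
    have h' : k * m ≤ k * (c k p' + 2) := by rw [← hm, ← hcc]; exact hhi
    exact Nat.le_of_mul_le_mul_left h' (by omega)
  have hnC : c k p' + k ≤ n := by
    obtain ⟨d, hdd⟩ := hCd
    have hdm : d < m := by
      have h2 : k * d < k * m := by omega
      exact Nat.lt_of_mul_lt_mul_left h2
    have h5 : k * (d + 1) ≤ k * m := Nat.mul_le_mul_left k (by omega)
    have h6 : k * (d + 1) = k * d + k := by ring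
    omega
  have hmlo : p' = 0 ∨ c k (p' - 1) < m := by
    rcases p' with _ | q
    · exact Or.inl rfl
    · right
      have h1 : c k (q + 1) = k * (c k q + 2) := rfl
      have h2 : k * (c k q + 2) < k * m := by omega
      have h3 := Nat.lt_of_mul_lt_mul_left h2
      exact (by omega : c k q < m)
  have hn4' : n % 4 = 3 * (m % 4) % 4 := by rw [hm, Nat.mul_mod, hk]
  have hn4 : (m % 4 = 0 ∧ n % 4 = 0) ∨ (m % 4 = 1 ∧ n % 4 = 3) ∨
      (m % 4 = 2 ∧ n % 4 = 2) ∨ (m % 4 = 3 ∧ n % 4 = 1) := by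
    rcases (by omega : m % 4 = 0 ∨ m % 4 = 1 ∨ m % 4 = 2 ∨ m % 4 = 3) with h | h | h | h <;>
      rw [h] at hn4' <;> omega
  have h2n : 2 ≤ n := by omega
  rcases Nat.lt_or_ge m (c k p' + 1) with hmlt2 | hmge
  · -- m ≤ c k p' : child m is in zone p'
    have hnlt : n < c k (p' + 1) := by
      have h7 : k * m < k * (c k p' + 2) := (Nat.mul_lt_mul_left (by omega)).mpr (by omega)
      omega
    rw [sg_div hk2 h2n ⟨m, hm⟩, hdivk,
      IH (n - 2) (by omega) (p' + 1) (Or.inr (by omega : c k p' < n - 2)) (by omega),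
      IH m (by omega) p' hmlo (by omega), mex_pair]
    clear IH hdivk hm hmlt hmpos hcc hhi hn4' hCd
    have hA2 : val k (p' + 1) (n - 2) = pat (p' + 1) (n - 2) := by
      rcases val_cases k (p' + 1) (n - 2) with ⟨-, hcond⟩ | ⟨h, -⟩
      · exact absurd hcond (by omega)
      · exact h
    have hT2 : val k (p' + 1) n = pat (p' + 1) n := by
      rcases val_cases k (p' + 1) n with ⟨-, hcond⟩ | ⟨h, -⟩
      · exact absurd hcond (by omega)
      · exact h
    rw [hA2, hT2]
    have hA' := pat_cases (p' + 1) (n - 2)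
    have hT' := pat_cases (p' + 1) n
    have hB := val_cases k p' m
    have hB' := pat_cases p' m
    rcases hn4 with ⟨h4a, h4b⟩ | ⟨h4a, h4b⟩ | ⟨h4a, h4b⟩ | ⟨h4a, h4b⟩ <;>
      split_ifs <;> omega
  · rcases Nat.lt_or_ge m (c k p' + 2) with hmlt3 | hmge2
    · -- m = c k p' + 1 : child m in zone p'+1
      have hmeq : m = c k p' + 1 := by omega
      have hnlt : n < c k (p' + 1) := by
        have h7 : k * m < k * (c k p' + 2) := (Nat.mul_lt_mul_left (by omega)).mpr (by omega)
        omega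
      rw [sg_div hk2 h2n ⟨m, hm⟩, hdivk,
        IH (n - 2) (by omega) (p' + 1) (Or.inr (by omega : c k p' < n - 2)) (by omega),
        IH m (by omega) (p' + 1) (Or.inr (by omega : c k p' < m)) (by omega),
        mex_pair]
      clear IH hdivk hm hmlt hmpos hcc hhi hn4' hCd
      have hA2 : val k (p' + 1) (n - 2) = pat (p' + 1) (n - 2) := by
        rcases val_cases k (p' + 1) (n - 2) with ⟨-, hcond⟩ | ⟨h, -⟩
        · exact absurd hcond (by omega)
        · exact h
      have hT2 : val k (p' + 1) n = pat (p' + 1) n := by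
        rcases val_cases k (p' + 1) n with ⟨-, hcond⟩ | ⟨h, -⟩
        · exact absurd hcond (by omega)
        · exact h
      have hB2 : val k (p' + 1) m = pat (p' + 1) m := by
        rcases val_cases k (p' + 1) m with ⟨-, hcond⟩ | ⟨h, -⟩
        · exact absurd hcond (by omega)
        · exact h
      rw [hA2, hT2, hB2]
      have hA' := pat_cases (p' + 1) (n - 2)
      have hT' := pat_cases (p' + 1) n
      have hB' := pat_cases (p' + 1) m
      rcases hn4 with ⟨h4a, h4b⟩ | ⟨h4a, h4b⟩ | ⟨h4a, h4b⟩ | ⟨h4a, h4b⟩ <;>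
        split_ifs <;> omega
    · -- m = c k p' + 2 : n = c k (p'+1)
      have hmeq : m = c k p' + 2 := by omega
      have hneq : n = c k (p' + 1) := by rw [hcc, hm, hmeq]
      rw [sg_div hk2 h2n ⟨m, hm⟩, hdivk,
        IH (n - 2) (by omega) (p' + 1) (Or.inr (by omega : c k p' < n - 2)) (by omega),
        IH m (by omega) (p' + 1) (Or.inr (by omega : c k p' < m)) (by omega),
        mex_pair]
      clear IH hdivk hm hmlt hmpos hcc hhi hn4' hCd
      have hA2 : val k (p' + 1) (n - 2) = pat (p' + 1) (n - 2) := by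
        rcases val_cases k (p' + 1) (n - 2) with ⟨-, hcond⟩ | ⟨h, -⟩
        · exact absurd hcond (by omega)
        · exact h
      have hT2 : val k (p' + 1) n = 2 := by
        rcases val_cases k (p' + 1) n with ⟨h, -⟩ | ⟨-, hcond⟩
        · exact h
        · exact absurd (Or.inr hneq) hcond
      have hB2 : val k (p' + 1) m = pat (p' + 1) m := by
        rcases val_cases k (p' + 1) m with ⟨-, hcond⟩ | ⟨h, -⟩
        · exact absurd hcond (by omega)
        · exact h
      rw [hA2, hT2, hB2]
      have hA' := pat_cases (p' + 1) (n - 2)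
      have hB' := pat_cases (p' + 1) m
      rcases hn4 with ⟨h4a, h4b⟩ | ⟨h4a, h4b⟩ | ⟨h4a, h4b⟩ | ⟨h4a, h4b⟩ <;>
        split_ifs <;> omega

set_option maxHeartbeats 1000000 in
lemma stepS_ndiv (k : ℕ) (hk : k % 4 = 3) (hk2 : 2 ≤ k) (n p' : ℕ)
    (IH : ∀ m < n, ∀ p, (p = 0 ∨ c k (p - 1) < m) → m ≤ c k p → sg k hk2 m = val k p m)
    (hlo' : c k p' < n) (hhi : n ≤ c k (p' + 1)) (hd : ¬ k ∣ n) :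
    sg k hk2 n = val k (p' + 1) n := by
  have hk3 : 3 ≤ k := by omega
  have hC4 : 4 * k ≤ c k p' := c_ge hk3 p'
  have hCm : c k p' % 4 = 2 * (p' % 2) := c_mod4 hk p'
  have hbig : 3 * c k p' + 6 ≤ c k (p' + 1) := by
    calc 3 * c k p' + 6 = 3 * (c k p' + 2) := by ring
      _ ≤ k * (c k p' + 2) := mul_le_mul_left hk3 _
      _ = c k (p' + 1) := rfl
  have hCz : p' ≠ 0 ∨ c k p' = 4 * k := by
    rcases p' with _ | q
    · exact Or.inr rfl
    · exact Or.inl (by omega)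
  have h2n : 2 ≤ n := by omega
  have hnec : n ≠ c k (p' + 1) := fun h => hd (h ▸ k_dvd_c k (p' + 1))
  have hT := val_cases k (p' + 1) n
  have hT' := pat_cases (p' + 1) n
  rcases Nat.lt_or_ge n (c k p' + 3) with hlt | hge
  · -- n = c k p' + 1 or + 2 ; child n-2 in zone p'
    have hClow : p' = 0 ∨ c k (p' - 1) + 6 ≤ c k p' := by
      rcases p' with _ | q
      · exact Or.inl rfl
      · right
        have h1 : 3 * c k q + 6 ≤ c k (q + 1) := by
          calc 3 * c k q + 6 = 3 * (c k q + 2) := by ring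
            _ ≤ k * (c k q + 2) := mul_le_mul_left hk3 _
            _ = c k (q + 1) := rfl
        exact (by omega : c k q + 6 ≤ c k (q + 1))
    have hne2 : n ≠ 2 * k := fun h => hd (h ▸ ⟨2, by ring⟩)
    rw [sg_sub hk2 h2n hd,
      IH (n - 2) (by omega) p'
        (by rcases hClow with h | h
            · exact Or.inl h
            · exact Or.inr (by omega))
        (by omega),
      mex_single]
    clear IH
    have hA := val_cases k p' (n - 2)
    have hA' := pat_cases p' (n - 2)
    split_ifs <;> omega
  · -- n ≥ c k p' + 3 : child n-2 in zone p'+1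
    have hne2 : n ≠ 2 * k := fun h => hd (h ▸ ⟨2, by ring⟩)
    rw [sg_sub hk2 h2n hd,
      IH (n - 2) (by omega) (p' + 1) (Or.inr (by omega : c k p' < n - 2)) (by omega),
      mex_single]
    clear IH
    have hA := val_cases k (p' + 1) (n - 2)
    have hA' := pat_cases (p' + 1) (n - 2)
    split_ifs <;> omega

lemma sg_eq_val (k : ℕ) (hk : k % 4 = 3) (hk2 : 2 ≤ k) (n : ℕ) :
    ∀ p, (p = 0 ∨ c k (p - 1) < n) → n ≤ c k p → sg k hk2 n = val k p n := by
  induction n using Nat.strong_induction_on with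
  | _ n IH =>
  intro p hlo hhi
  match p with
  | 0 => exact step0 k hk hk2 n IH (by rw [← c_zero]; exact hhi)
  | p' + 1 =>
    have hlo' : c k p' < n := by
      rcases hlo with h | h
      · omega
      · exact h
    by_cases hd : k ∣ n
    · exact stepS_div k hk hk2 n p' IH hlo' hhi hd
    · exact stepS_ndiv k hk hk2 n p' IH hlo' hhi hd

theorem sg_Im_odd (k : ℕ) (hk : k % 4 = 3) (m : ℕ) (hm : Odd m) (hm1 : 1 ≤ m)
    (n : ℕ) (h1 : ell k m ≤ n) (h2 : n ≤ u k m)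
    (r : ℕ) (hr : r = (n - ell k m) % 4) :
    (r = 0 ∨ r = 3 → sg k (by omega) n = 1) ∧
    (r = 1 ∨ r = 2 → sg k (by omega) n = 0) := by
  have hk2 : (2:ℕ) ≤ k := by omega
  have hk3 : (3:ℕ) ≤ k := by omega
  have hm2 : m % 2 = 1 := Nat.odd_iff.mp hm
  by_cases h1m : m = 1
  · subst h1m
    have hell : ell k 1 = 2 * k + 1 := by simp [ell]
    have hu : u k 1 = 4 * k - 1 := by simp [u]
    rw [hell] at h1 hr
    rw [hu] at h2
    have hval := sg_eq_val k hk hk2 n 0 (Or.inl rfl) (by rw [c_zero]; omega)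
    rw [hval]
    have hT := val_cases k 0 n
    have hT' := pat_cases 0 n
    have hc0 : c k 0 = 4 * k := c_zero k
    constructor <;> intro hh <;> omega
  · have hm3 : 3 ≤ m := by omega
    rw [ell, if_neg h1m] at h1 hr
    rw [u, if_neg h1m] at h2
    have hge1 : 4 * k ≤ c k (m - 1) := c_ge hk3 (m - 1)
    have hge2 : 4 * k ≤ c k (m - 2) := c_ge hk3 (m - 2)
    have hmm : m - 1 = (m - 2) + 1 := by omega
    have hval := sg_eq_val k hk hk2 n (m - 1)
      (Or.inr (by rw [show m - 1 - 1 = m - 2 by omega]; omega))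
      (by omega)
    rw [hval]
    have hT := val_cases k (m - 1) n
    have hT' := pat_cases (m - 1) n
    have hc2 : c k (m - 2) % 4 = 2 * ((m - 2) % 2) := c_mod4 hk (m - 2)
    have hc1 : c k (m - 1) % 4 = 2 * ((m - 1) % 2) := c_mod4 hk (m - 1)
    have hne : n ≠ c k (m - 1) := by omega
    have hp2 : (m - 1) % 2 = 0 := by omega
    constructor <;> intro hh <;> omega
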